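/- arXiv:1601.03574 — 6 statements merged into one kernel-verified Lean document; each statement's English description precedes it below -/
import Mathlib

section
/- Let f = (f_m) be a supermartingale relative to a convex set M of mutually equivalent probability measures for which there exist constants 0 < l ≤ L < ∞ with l ≤ dQ₁/dQ₂ ≤ L a.s. for all Q₁, Q₂ ∈ M. Suppose that for some measure P₁ ∈ M there exist a natural number m₀ ≥ 1 and an 𝓕_{m₀−1}-measurable nonnegative random variable φ_{m₀} with P₁(φ_{m₀} > 0) > 0 such that f_{m₀−1} − E^{P₁}[f_{m₀} | 𝓕_{m₀−1}] ≥ φ_{m₀} a.s. Then for every measure Q of the form Q = (1−α)P₁ + αP₂ with P₂ ∈ M and 0 ≤ α ≤ L/(1+L), one has f_{m₀−1} − E^{Q}[f_{m₀} | 𝓕_{m₀−1}] ≥ (l/(1+L)) φ_{m₀} a.s. -/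
open MeasureTheory Filter Set
open scoped ENNReal

/-!
Fix `A ∈ ℱ (m₀ - 1)` and put `Δ = f (m₀ - 1) - f m₀`. Then
`∫_A Δ dQ = (1 - α) ∫_A Δ dP₁ + α ∫_A Δ dP₂`, the `P₂`-term is nonnegative by the supermartingale
property, and `∫_A Δ dP₁ ≥ ∫_A φ dP₁ ≥ l ∫_A φ dQ` because `dP₁/dQ ≥ l`. With `1 - α ≥ 1/(1 + L)`
this gives `∫_A (f (m₀ - 1) - E^Q[f m₀ | ℱ (m₀ - 1)]) dQ = ∫_A Δ dQ ≥ (l/(1 + L)) ∫_A φ dQ` for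
every such `A`, and as both integrands are `ℱ (m₀ - 1)`-measurable the inequality holds a.e.
-/

namespace MeasureTheory

variable {Ω : Type*} {m0 : MeasurableSpace Ω}

section SubSigmaAlgebra

variable {μ : Measure Ω} {m : MeasurableSpace Ω} {φ f g : Ω → ℝ}

theorem ae_le_of_forall_setIntegral_le_of_stronglyMeasurable (hm : m ≤ m0)
    [SigmaFinite (μ.trim hm)] (hf : StronglyMeasurable[m] f) (hg : StronglyMeasurable[m] g)
    (hfi : Integrable f μ) (hgi : Integrable g μ)
    (hfg : ∀ s, MeasurableSet[m] s → ∫ ω in s, f ω ∂μ ≤ ∫ ω in s, g ω ∂μ) : f ≤ᵐ[μ] g := by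
  refine ae_of_ae_trim hm
    (ae_le_of_forall_setIntegral_le (hfi.trim hm hf) (hgi.trim hm hg) fun s hs _ => ?_)
  rw [← setIntegral_trim hm hf hs, ← setIntegral_trim hm hg hs]
  exact hfg s hs

theorem setIntegral_sub_condExp (hm : m ≤ m0) [SigmaFinite (μ.trim hm)] (hf : Integrable f μ)
    (hg : Integrable g μ) {s : Set Ω} (hs : MeasurableSet[m] s) :
    ∫ ω in s, (f ω - μ[g | m] ω) ∂μ = ∫ ω in s, f ω ∂μ - ∫ ω in s, g ω ∂μ := by
  rw [integral_sub hf.integrableOn integrable_condExp.integrableOn, setIntegral_condExp hm hg hs]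

theorem setIntegral_le_sub_of_ae_le_sub_condExp (hm : m ≤ m0) [SigmaFinite (μ.trim hm)]
    (hφ : Integrable φ μ) (hf : Integrable f μ) (hg : Integrable g μ)
    (hφfg : ∀ᵐ ω ∂μ, φ ω ≤ f ω - μ[g | m] ω) {s : Set Ω} (hs : MeasurableSet[m] s) :
    ∫ ω in s, φ ω ∂μ ≤ ∫ ω in s, f ω ∂μ - ∫ ω in s, g ω ∂μ := by
  rw [← setIntegral_sub_condExp hm hf hg hs]
  exact setIntegral_mono_ae hφ.integrableOn (hf.sub integrable_condExp).integrableOn hφfg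

theorem ae_le_sub_condExp_of_forall_setIntegral_le (hm : m ≤ m0) [SigmaFinite (μ.trim hm)]
    (hφm : StronglyMeasurable[m] φ) (hfm : StronglyMeasurable[m] f) (hφ : Integrable φ μ)
    (hf : Integrable f μ) (hg : Integrable g μ)
    (hφfg : ∀ s, MeasurableSet[m] s → ∫ ω in s, φ ω ∂μ ≤ ∫ ω in s, f ω ∂μ - ∫ ω in s, g ω ∂μ) :
    ∀ᵐ ω ∂μ, φ ω ≤ f ω - μ[g | m] ω :=
  ae_le_of_forall_setIntegral_le_of_stronglyMeasurable hm hφm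
    (hfm.sub stronglyMeasurable_condExp) hφ (hf.sub integrable_condExp) fun s hs => by
      rw [setIntegral_sub_condExp hm hf hg hs]; exact hφfg s hs

end SubSigmaAlgebra

namespace Measure

theorem ofReal_smul_le_of_le_toReal_rnDeriv {μ ν : Measure Ω} {c : ℝ}
    (h : ∀ᵐ ω ∂ν, c ≤ (μ.rnDeriv ν ω).toReal) : ENNReal.ofReal c • ν ≤ μ := by
  rw [← withDensity_const]
  refine (withDensity_mono ?_).trans (withDensity_rnDeriv_le μ ν)
  filter_upwards [h] with ω hω using ENNReal.ofReal_le_of_le_toReal hω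

theorem le_ofReal_smul_of_toReal_rnDeriv_le {μ ν : Measure Ω} [SigmaFinite μ]
    [HaveLebesgueDecomposition μ ν] (hμν : μ ≪ ν) {c : ℝ}
    (h : ∀ᵐ ω ∂ν, (μ.rnDeriv ν ω).toReal ≤ c) : μ ≤ ENNReal.ofReal c • ν := by
  rw [← withDensity_const]
  conv_lhs => rw [← withDensity_rnDeriv_eq μ ν hμν]
  refine withDensity_mono ?_
  filter_upwards [h, rnDeriv_ne_top μ ν] with ω hω hfin
  rw [← ENNReal.ofReal_toReal hfin]
  exact ENNReal.ofReal_le_ofReal hω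

end Measure

theorem mul_setIntegral_le_of_ofReal_smul_le {μ ν : Measure Ω} {c : ℝ} (hc : 0 ≤ c)
    (hμν : ENNReal.ofReal c • μ ≤ ν) {f : Ω → ℝ} (hf0 : 0 ≤ f) (hf : Integrable f ν)
    (s : Set Ω) : c * ∫ ω in s, f ω ∂μ ≤ ∫ ω in s, f ω ∂ν := by
  rw [← ENNReal.toReal_ofReal hc, ← smul_eq_mul, ← integral_smul_measure,
    ← Measure.restrict_smul]
  exact integral_mono_measure (Measure.restrict_mono subset_rfl hμν) (ae_of_all _ hf0)
    hf.integrableOn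

theorem setIntegral_ofReal_smul_add_ofReal_smul {μ ν : Measure Ω} {a b : ℝ} (ha : 0 ≤ a)
    (hb : 0 ≤ b) {f : Ω → ℝ} (hμ : Integrable f μ) (hν : Integrable f ν) (s : Set Ω) :
    ∫ ω in s, f ω ∂(ENNReal.ofReal a • μ + ENNReal.ofReal b • ν)
      = a * ∫ ω in s, f ω ∂μ + b * ∫ ω in s, f ω ∂ν := by
  rw [Measure.restrict_add, Measure.restrict_smul, Measure.restrict_smul,
    integral_add_measure (hμ.restrict.smul_measure ENNReal.ofReal_ne_top)
      (hν.restrict.smul_measure ENNReal.ofReal_ne_top),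
    integral_smul_measure, integral_smul_measure, ENNReal.toReal_ofReal ha,
    ENNReal.toReal_ofReal hb, smul_eq_mul, smul_eq_mul]

theorem Supermartingale.mul_setIntegral_sub_le_of_ofReal_smul_add_ofReal_smul
    {ℱ : Filtration ℕ m0} {f : ℕ → Ω → ℝ} {μ ν : Measure Ω} [IsFiniteMeasure ν]
    (hf : Supermartingale f ℱ ν) (hfμ : ∀ n, Integrable (f n) μ) {a b : ℝ} (ha : 0 ≤ a)
    (hb : 0 ≤ b) {i j : ℕ} (hij : i ≤ j) {s : Set Ω} (hs : MeasurableSet[ℱ i] s) :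
    a * (∫ ω in s, f i ω ∂μ - ∫ ω in s, f j ω ∂μ)
      ≤ ∫ ω in s, f i ω ∂(ENNReal.ofReal a • μ + ENNReal.ofReal b • ν)
        - ∫ ω in s, f j ω ∂(ENNReal.ofReal a • μ + ENNReal.ofReal b • ν) := by
  rw [setIntegral_ofReal_smul_add_ofReal_smul ha hb (hfμ i) (hf.integrable i),
    setIntegral_ofReal_smul_add_ofReal_smul ha hb (hfμ j) (hf.integrable j)]
  nlinarith [mul_nonneg hb (sub_nonneg.2 (hf.setIntegral_le hij hs))]

end MeasureTheory

theorem stmt0_general {Ω : Type*} {m0 : MeasurableSpace Ω}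
    (ℱ : Filtration ℕ m0)
    (M : Set (Measure Ω))
    (hM_prob : ∀ P ∈ M, IsProbabilityMeasure P)
    (hM_conv : ∀ P ∈ M, ∀ Q ∈ M, ∀ α : ℝ, 0 ≤ α → α ≤ 1 →
      (ENNReal.ofReal (1 - α)) • P + (ENNReal.ofReal α) • Q ∈ M)
    (hM_equiv : ∀ P ∈ M, ∀ Q ∈ M, P ≪ Q)
    (l L : ℝ) (hl : 0 < l) (hlL : l ≤ L)
    (hRN : ∀ P ∈ M, ∀ Q ∈ M, ∀ᵐ ω ∂Q,
      l ≤ (P.rnDeriv Q ω).toReal ∧ (P.rnDeriv Q ω).toReal ≤ L)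
    (f : ℕ → Ω → ℝ)
    (hf : ∀ P ∈ M, Supermartingale f ℱ P)
    (P₁ : Measure Ω) (hP₁ : P₁ ∈ M)
    (m₀ : ℕ)
    (φ : Ω → ℝ)
    (hφ_meas : StronglyMeasurable[ℱ (m₀ - 1)] φ)
    (hφ_nonneg : ∀ ω, 0 ≤ φ ω)
    (hineq : ∀ᵐ ω ∂P₁, φ ω ≤ f (m₀ - 1) ω - (P₁[f m₀ | ℱ (m₀ - 1)]) ω) :
    ∀ P₂ ∈ M, ∀ α : ℝ, 0 ≤ α → α ≤ L / (1 + L) →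
      ∀ᵐ ω ∂((ENNReal.ofReal (1 - α)) • P₁ + (ENNReal.ofReal α) • P₂),
        (l / (1 + L)) * φ ω ≤ f (m₀ - 1) ω -
          ((((ENNReal.ofReal (1 - α)) • P₁ + (ENNReal.ofReal α) • P₂))[f m₀ | ℱ (m₀ - 1)]) ω := by
  intro P₂ hP₂ α hα0 hα
  have h1L : 0 < 1 + L := by linarith
  have hα1 : α ≤ 1 := hα.trans ((div_le_one h1L).2 (by linarith))
  set Q := ENNReal.ofReal (1 - α) • P₁ + ENNReal.ofReal α • P₂
  have hQ : Q ∈ M := hM_conv P₁ hP₁ P₂ hP₂ α hα0 hα1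
  have := hM_prob P₁ hP₁; have := hM_prob P₂ hP₂; have := hM_prob Q hQ
  have hcoef : l / (1 + L) ≤ (1 - α) * l := by
    rw [div_le_iff₀ h1L]; nlinarith [(le_div_iff₀ h1L).1 hα]
  have hφ₁ : Integrable φ P₁ :=
    (((hf P₁ hP₁).integrable _).sub integrable_condExp).mono'
      (hφ_meas.mono (ℱ.le _)).aestronglyMeasurable
      (by filter_upwards [hineq] with ω hω; rwa [Real.norm_of_nonneg (hφ_nonneg ω)])
  have hφQ : Integrable φ Q := hφ₁.of_measure_le_smul ENNReal.ofReal_ne_top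
    (Measure.le_ofReal_smul_of_toReal_rnDeriv_le (hM_equiv Q hQ P₁ hP₁)
      (by filter_upwards [hRN Q hQ P₁ hP₁] with ω hω using hω.2))
  have hlQ : ENNReal.ofReal l • Q ≤ P₁ := Measure.ofReal_smul_le_of_le_toReal_rnDeriv
    (by filter_upwards [hRN P₁ hP₁ Q hQ] with ω hω using hω.1)
  have hf₁ := (hf P₁ hP₁).integrable
  have hfQ := (hf Q hQ).integrable
  refine ae_le_sub_condExp_of_forall_setIntegral_le (ℱ.le _) (hφ_meas.const_mul _)
    ((hf Q hQ).stronglyAdapted _) (hφQ.const_mul _) (hfQ _) (hfQ _) fun s hs => ?_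
  rw [integral_const_mul]
  calc l / (1 + L) * ∫ ω in s, φ ω ∂Q
      ≤ (1 - α) * (l * ∫ ω in s, φ ω ∂Q) := by
        rw [← mul_assoc]; exact mul_le_mul_of_nonneg_right hcoef (integral_nonneg hφ_nonneg)
    _ ≤ (1 - α) * ∫ ω in s, φ ω ∂P₁ := mul_le_mul_of_nonneg_left
        (mul_setIntegral_le_of_ofReal_smul_le hl.le hlQ hφ_nonneg hφ₁ s) (by linarith)
    _ ≤ (1 - α) * (∫ ω in s, f (m₀ - 1) ω ∂P₁ - ∫ ω in s, f m₀ ω ∂P₁) :=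
        mul_le_mul_of_nonneg_left (setIntegral_le_sub_of_ae_le_sub_condExp (ℱ.le _) hφ₁
          (hf₁ _) (hf₁ _) hineq hs) (by linarith)
    _ ≤ ∫ ω in s, f (m₀ - 1) ω ∂Q - ∫ ω in s, f m₀ ω ∂Q :=
        (hf P₂ hP₂).mul_setIntegral_sub_le_of_ofReal_smul_add_ofReal_smul hf₁ (by linarith) hα0
          (Nat.sub_le _ _) hs

/-- **Theorem 1 of the paper.**
Let `f` be a supermartingale relative to a convex set `M` of mutually equivalent
probability measures whose pairwise Radon–Nikodym derivatives are bounded between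
`l` and `L`.  If for some `P₁ ∈ M` there are `m₀ ≥ 1` and an `ℱ (m₀ - 1)`-measurable
nonnegative random variable `φ` with `P₁(φ > 0) > 0` such that
`f (m₀-1) - E^{P₁}[f m₀ | ℱ (m₀-1)] ≥ φ` a.s., then for every `Q = (1-α) P₁ + α P₂`
with `P₂ ∈ M` and `0 ≤ α ≤ L/(1+L)` one has
`f (m₀-1) - E^{Q}[f m₀ | ℱ (m₀-1)] ≥ (l/(1+L)) φ` a.s. -/
theorem stmt0 {Ω : Type*} {m0 : MeasurableSpace Ω}
    (ℱ : Filtration ℕ m0) (hℱ0 : ∀ A, MeasurableSet[ℱ 0] A → A = ∅ ∨ A = Set.univ)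
    (M : Set (Measure Ω))
    (hM_prob : ∀ P ∈ M, IsProbabilityMeasure P)
    (hM_conv : ∀ P ∈ M, ∀ Q ∈ M, ∀ α : ℝ, 0 ≤ α → α ≤ 1 →
      (ENNReal.ofReal (1 - α)) • P + (ENNReal.ofReal α) • Q ∈ M)
    (hM_equiv : ∀ P ∈ M, ∀ Q ∈ M, P ≪ Q)
    (l L : ℝ) (hl : 0 < l) (hlL : l ≤ L)
    (hRN : ∀ P ∈ M, ∀ Q ∈ M, ∀ᵐ ω ∂Q,
      l ≤ (P.rnDeriv Q ω).toReal ∧ (P.rnDeriv Q ω).toReal ≤ L)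
    (f : ℕ → Ω → ℝ)
    (hf : ∀ P ∈ M, Supermartingale f ℱ P)
    (P₁ : Measure Ω) (hP₁ : P₁ ∈ M)
    (m₀ : ℕ) (hm₀ : 1 ≤ m₀)
    (φ : Ω → ℝ)
    (hφ_meas : StronglyMeasurable[ℱ (m₀ - 1)] φ)
    (hφ_nonneg : ∀ ω, 0 ≤ φ ω)
    (hφ_pos : 0 < P₁ {ω | 0 < φ ω})
    (hineq : ∀ᵐ ω ∂P₁, φ ω ≤ f (m₀ - 1) ω - (P₁[f m₀ | ℱ (m₀ - 1)]) ω) :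
    ∀ P₂ ∈ M, ∀ α : ℝ, 0 ≤ α → α ≤ L / (1 + L) →
      ∀ᵐ ω ∂((ENNReal.ofReal (1 - α)) • P₁ + (ENNReal.ofReal α) • P₂),
        (l / (1 + L)) * φ ω ≤ f (m₀ - 1) ω -
          ((((ENNReal.ofReal (1 - α)) • P₁ + (ENNReal.ofReal α) • P₂))[f m₀ | ℱ (m₀ - 1)]) ω :=
  stmt0_general ℱ M hM_prob hM_conv hM_equiv l L hl hlL hRN f hf P₁ hP₁ m₀ φ hφ_meas hφ_nonneg hineq
end

section
/- Let P₁, …, P_n be equivalent probability measures with 0 < l ≤ dP_i/dP_j ≤ L < ∞ a.s. for all i, j, and let M = {Σ_{i=1}^n α_i P_i : α_i ≥ 0, Σ α_i = 1}. Let f = (f_m) be a supermartingale relative to M with |f_m| ≤ φ for all m, where φ ≥ 0 and E^Q φ < T < ∞ for all Q ∈ M, T independent of Q. Suppose there exist a natural number m₀ ≥ 1 and an 𝓕_{m₀−1}-measurable nonnegative random variable φ_{m₀}ⁿ with P₁(φ_{m₀}ⁿ > 0) > 0 such that f_{m₀−1} − E^{P_i}[f_{m₀} | 𝓕_{m₀−1}]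 ≥ φ_{m₀}ⁿ a.s. for i = 1, …, n. If g⁰ = (g_m⁰) is the maximal element of a maximal chain G̃ ⊆ G and the equalities E^{P_i}(f_∞ + g_∞⁰) = f_0 hold for i = 1, …, n, where f_∞ = lim_{m→∞} f_m and g_∞⁰ = lim_{m→∞} g_m⁰ (these limits exist a.s.), then E^{P}[f_m + g_m⁰ | 𝓕_k] = f_k + g_k⁰ a.s. for all 0 ≤ k ≤ m and every P ∈ M. -/
open MeasureTheory Filter Set
open scoped ENNReal

variable {Ω : Type*}

/-- The convex set of measures generated by the finite family `P`. -/
def mixSet {m0 : MeasurableSpace Ω} {n : ℕ} (P : Fin (n + 1) → Measure Ω) :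
    Set (Measure Ω) :=
  {Q | ∃ α : Fin (n + 1) → ℝ, (∀ i, 0 ≤ α i) ∧ (∑ i, α i = 1) ∧
    Q = ∑ i, (ENNReal.ofReal (α i)) • P i}

/-- The set `G` of adapted non-decreasing processes `g` with `g 0 = 0` such that
`f + g` is a supermartingale relative to every measure in `M`. -/
def memG {m0 : MeasurableSpace Ω} (ℱ : Filtration ℕ m0) (M : Set (Measure Ω))
    (f g : ℕ → Ω → ℝ) : Prop :=
  Adapted ℱ g ∧ (∀ ω, g 0 ω = 0) ∧ (∀ ω, Monotone fun m => g m ω) ∧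
    ∀ P ∈ M, Supermartingale (f + g) ℱ P

/-- The partial order on `G` : `g₁ ⪯ g₂` iff `g₁ m ≤ g₂ m` almost surely for every `m`. -/
def gLE {m0 : MeasurableSpace Ω} (M : Set (Measure Ω)) (g₁ g₂ : ℕ → Ω → ℝ) : Prop :=
  ∀ P ∈ M, ∀ m : ℕ, g₁ m ≤ᵐ[P] g₂ m

/-! A supermartingale has non-increasing expectations. Under each `P i`, dominated convergence
for `f` and monotone convergence for `g⁰` (whose expectations are bounded, since
`E g⁰ₘ ≤ E f₀ - E fₘ ≤ E f₀ + E φ`) give `E(fₘ + g⁰ₘ) ≥ E(f_∞ + g⁰_∞) = E f₀ = E(f₀ + g⁰₀)`.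
So `f + g⁰` has constant expectation under every `P i`, hence under every mixture `Q`, and a
supermartingale with constant expectation is a martingale. -/

section Mixture

variable {m0 : MeasurableSpace Ω} {n : ℕ} {P : Fin (n + 1) → Measure Ω}

theorem mem_mixSet (i : Fin (n + 1)) : P i ∈ mixSet P := by
  refine ⟨Pi.single i 1, fun j => ?_, by simp, ?_⟩
  · by_cases h : j = i <;> simp [h]
  · rw [Finset.sum_eq_single i (fun j _ hj => by simp [hj]) (by simp)]
    simp

theorem integral_sum_ofReal_smul_measure {α : Fin (n + 1) → ℝ} (hα : ∀ i, 0 ≤ α i) {F : Ω → ℝ}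
    (hF : ∀ i, Integrable F (P i)) :
    ∫ ω, F ω ∂(∑ i, ENNReal.ofReal (α i) • P i) = ∑ i, α i * ∫ ω, F ω ∂(P i) := by
  rw [integral_finsetSum_measure fun i _ => (hF i).smul_measure ENNReal.ofReal_ne_top]
  refine Finset.sum_congr rfl fun i _ => ?_
  rw [integral_smul_measure, ENNReal.toReal_ofReal (hα i), smul_eq_mul]

theorem integral_eq_of_mem_mixSet {Q : Measure Ω} (hQ : Q ∈ mixSet P) {F G : Ω → ℝ}
    (hF : ∀ i, Integrable F (P i)) (hG : ∀ i, Integrable G (P i))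
    (hFG : ∀ i, ∫ ω, F ω ∂(P i) = ∫ ω, G ω ∂(P i)) :
    ∫ ω, F ω ∂Q = ∫ ω, G ω ∂Q := by
  obtain ⟨α, hα, -, rfl⟩ := hQ
  simp only [integral_sum_ofReal_smul_measure hα hF, integral_sum_ofReal_smul_measure hα hG, hFG]

theorem isProbabilityMeasure_of_mem_mixSet [∀ i, IsProbabilityMeasure (P i)] {Q : Measure Ω}
    (hQ : Q ∈ mixSet P) : IsProbabilityMeasure Q := by
  obtain ⟨α, hα, hα_sum, rfl⟩ := hQ
  constructor
  simp only [Measure.coe_finsetSum, Finset.sum_apply, Measure.smul_apply, measure_univ,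
    smul_eq_mul, mul_one]
  rw [← ENNReal.ofReal_sum_of_nonneg fun i _ => hα i, hα_sum, ENNReal.ofReal_one]

end Mixture

theorem integrable_of_tendsto_of_monotone {m0 : MeasurableSpace Ω} {μ : Measure Ω}
    {f : ℕ → Ω → ℝ} {F : Ω → ℝ} {B : ℝ} (hf : ∀ n, Integrable (f n) μ)
    (h_mono : ∀ᵐ ω ∂μ, Monotone fun n => f n ω)
    (h_tendsto : ∀ᵐ ω ∂μ, Tendsto (fun n => f n ω) atTop (nhds (F ω)))
    (h_bound : ∀ n, ∫ ω, f n ω ∂μ ≤ B) :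
    Integrable F μ := by
  suffices h : Integrable (F - f 0) μ by simpa using h.add (hf 0)
  have h_nonneg : ∀ᵐ ω ∂μ, ∀ n, 0 ≤ f n ω - f 0 ω := by
    filter_upwards [h_mono] with ω hω n using sub_nonneg.2 (hω (Nat.zero_le n))
  have h_lim : Tendsto (fun n => ∫⁻ ω, ENNReal.ofReal (f n ω - f 0 ω) ∂μ) atTop
      (nhds (∫⁻ ω, ENNReal.ofReal (F ω - f 0 ω) ∂μ)) := by
    refine lintegral_tendsto_of_tendsto_of_monotone
      (fun n => ((hf n).sub (hf 0)).aemeasurable.ennreal_ofReal) ?_ ?_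
    · filter_upwards [h_mono] with ω hω n k hnk
      exact ENNReal.ofReal_le_ofReal (sub_le_sub_right (hω hnk) _)
    · filter_upwards [h_tendsto] with ω hω
      exact ENNReal.tendsto_ofReal (hω.sub_const _)
  have h_le : ∀ n,
      ∫⁻ ω, ENNReal.ofReal (f n ω - f 0 ω) ∂μ ≤ ENNReal.ofReal (B - ∫ ω, f 0 ω ∂μ) := by
    intro n
    rw [← ofReal_integral_eq_lintegral_ofReal (f := fun ω => f n ω - f 0 ω) ((hf n).sub (hf 0))
      (h_nonneg.mono fun ω hω => hω n), integral_sub (hf n) (hf 0)]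
    exact ENNReal.ofReal_le_ofReal (sub_le_sub_right (h_bound n) _)
  refine ⟨(aestronglyMeasurable_of_tendsto_ae atTop (fun n => (hf n).1) h_tendsto).sub (hf 0).1, ?_⟩
  rw [hasFiniteIntegral_iff_ofReal]
  · exact (le_of_tendsto' h_lim h_le).trans_lt ENNReal.ofReal_lt_top
  · filter_upwards [h_tendsto, h_nonneg] with ω hω hω'
    exact ge_of_tendsto' (hω.sub_const _) hω'

namespace MeasureTheory.Supermartingale

variable {m0 : MeasurableSpace Ω} {ℱ : Filtration ℕ m0} {μ : Measure Ω} [IsFiniteMeasure μ]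

theorem integral_le {f : ℕ → Ω → ℝ} (hf : Supermartingale f ℱ μ) {i j : ℕ} (hij : i ≤ j) :
    ∫ ω, f j ω ∂μ ≤ ∫ ω, f i ω ∂μ := by
  simpa using hf.setIntegral_le hij MeasurableSet.univ

theorem condExp_ae_eq_of_integral_eq {f : ℕ → Ω → ℝ} (hf : Supermartingale f ℱ μ) {i j : ℕ}
    (hij : i ≤ j) (h : ∫ ω, f j ω ∂μ = ∫ ω, f i ω ∂μ) :
    μ[f j | ℱ i] =ᵐ[μ] f i :=
  (integral_eq_iff_of_ae_le integrable_condExp (hf.integrable i) (hf.condExp_ae_le hij)).1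
    (by rw [integral_condExp (ℱ.le i), h])

theorem integral_limit_le {f g : ℕ → Ω → ℝ} {φ fInf gInf : Ω → ℝ}
    (hfg : Supermartingale (f + g) ℱ μ) (hf : ∀ m, Integrable (f m) μ) (hφ : Integrable φ μ)
    (hf_bound : ∀ m, ∀ᵐ ω ∂μ, ‖f m ω‖ ≤ φ ω) (hg_mono : ∀ᵐ ω ∂μ, Monotone fun m => g m ω)
    (hfInf : ∀ᵐ ω ∂μ, Tendsto (fun m => f m ω) atTop (nhds (fInf ω)))
    (hgInf : ∀ᵐ ω ∂μ, Tendsto (fun m => g m ω) atTop (nhds (gInf ω))) (m : ℕ) :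
    ∫ ω, (fInf ω + gInf ω) ∂μ ≤ ∫ ω, (f m ω + g m ω) ∂μ := by
  have hX_le : ∀ {i j}, i ≤ j → ∫ ω, (f j ω + g j ω) ∂μ ≤ ∫ ω, (f i ω + g i ω) ∂μ :=
    fun hij => hfg.integral_le hij
  have hg : ∀ m, Integrable (g m) μ := fun m => by
    simpa using (hfg.integrable m).sub (hf m)
  have h_add : ∀ m, ∫ ω, (f m ω + g m ω) ∂μ = ∫ ω, f m ω ∂μ + ∫ ω, g m ω ∂μ :=
    fun m => integral_add (hf m) (hg m)
  have hfInf_int : Integrable fInf μ := by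
    refine hφ.mono' (aestronglyMeasurable_of_tendsto_ae atTop (fun m => (hf m).1) hfInf) ?_
    filter_upwards [hfInf, ae_all_iff.2 hf_bound] with ω hω hω'
    exact le_of_tendsto' hω.norm hω'
  have hgInf_int : Integrable gInf μ := by
    refine integrable_of_tendsto_of_monotone hg hg_mono hgInf
      (B := ∫ ω, (f 0 ω + g 0 ω) ∂μ + ∫ ω, φ ω ∂μ) fun k => ?_
    have h_f : -∫ ω, φ ω ∂μ ≤ ∫ ω, f k ω ∂μ :=
      neg_le_of_abs_le (norm_integral_le_of_norm_le hφ (hf_bound k))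
    linarith [hX_le (Nat.zero_le k), h_add k]
  have h_lim : Tendsto (fun k => ∫ ω, (f k ω + g k ω) ∂μ) atTop
      (nhds (∫ ω, fInf ω ∂μ + ∫ ω, gInf ω ∂μ)) := by
    simp only [h_add]
    exact (tendsto_integral_of_dominated_convergence φ (fun k => (hf k).1) hφ hf_bound hfInf).add
      (integral_tendsto_of_tendsto_of_monotone hg hgInf_int hg_mono hgInf)
  rw [integral_add hfInf_int hgInf_int]
  exact le_of_tendsto h_lim (eventually_atTop.2 ⟨m, fun k hk => hX_le hk⟩)

end MeasureTheory.Supermartingale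

theorem stmt3_general {m0 : MeasurableSpace Ω}
    (ℱ : Filtration ℕ m0)
    (n : ℕ) (P : Fin (n + 1) → Measure Ω)
    (hP_prob : ∀ i, IsProbabilityMeasure (P i))
    (f : ℕ → Ω → ℝ)
    (hf : ∀ Q ∈ mixSet P, Supermartingale f ℱ Q)
    (φ : Ω → ℝ)
    (hbound : ∀ m, ∀ ω, |f m ω| ≤ φ ω)
    (hφ_int : ∀ Q ∈ mixSet P, Integrable φ Q)
    (C : Set (ℕ → Ω → ℝ))
    (hCG : ∀ g ∈ C, memG ℱ (mixSet P) f g)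
    (g0 : ℕ → Ω → ℝ) (hg0C : g0 ∈ C)
    (fInf gInf : Ω → ℝ)
    (hfInf : ∀ i, ∀ᵐ ω ∂(P i), Tendsto (fun m => f m ω) atTop (nhds (fInf ω)))
    (hgInf : ∀ i, ∀ᵐ ω ∂(P i), Tendsto (fun m => g0 m ω) atTop (nhds (gInf ω)))
    (heq : ∀ i, ∫ ω, (fInf ω + gInf ω) ∂(P i) = ∫ ω, f 0 ω ∂(P i)) :
    ∀ Q ∈ mixSet P, ∀ k m : ℕ, k ≤ m →
      (Q[(fun ω => f m ω + g0 m ω) | ℱ k]) =ᵐ[Q] fun ω => f k ω + g0 k ω := by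
  obtain ⟨-, hg0_zero, hg0_mono, hX⟩ := hCG g0 hg0C
  have hX_integral : ∀ i m, ∫ ω, (f m ω + g0 m ω) ∂(P i) = ∫ ω, f 0 ω ∂(P i) := by
    intro i m
    have hXi := hX (P i) (mem_mixSet i)
    refine le_antisymm ?_ ?_
    · calc ∫ ω, (f m ω + g0 m ω) ∂(P i) ≤ ∫ ω, (f 0 ω + g0 0 ω) ∂(P i) :=
            hXi.integral_le (Nat.zero_le m)
        _ = ∫ ω, f 0 ω ∂(P i) := by simp [hg0_zero]
    · rw [← heq i]
      exact hXi.integral_limit_le (hf _ (mem_mixSet i)).integrable (hφ_int _ (mem_mixSet i))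
        (fun m => ae_of_all _ (hbound m)) (ae_of_all _ hg0_mono) (hfInf i) (hgInf i) m
  intro Q hQ k m hkm
  haveI := isProbabilityMeasure_of_mem_mixSet (P := P) hQ
  refine (hX Q hQ).condExp_ae_eq_of_integral_eq hkm ?_
  exact integral_eq_of_mem_mixSet hQ (fun i => (hX _ (mem_mixSet i)).integrable m)
    (fun i => (hX _ (mem_mixSet i)).integrable k)
    (fun i => (hX_integral i m).trans (hX_integral i k).symm)

/-- **Theorem 2 of the paper.**
For `M` generated by finitely many equivalent measures `P i` with bounded
Radon–Nikodym derivatives, a supermartingale `f` relative to `M` dominated by an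
integrable `φ`, and a maximal element `g⁰` of a maximal chain in `G` :
if `E^{P i}(f_∞ + g⁰_∞) = f_0` for all `i` then
`E^{P}[f m + g⁰ m | ℱ k] = f k + g⁰ k` a.s. for all `k ≤ m` and all `P ∈ M`. -/
theorem stmt3 {m0 : MeasurableSpace Ω}
    (ℱ : Filtration ℕ m0) (hℱ0 : ∀ A, MeasurableSet[ℱ 0] A → A = ∅ ∨ A = Set.univ)
    (n : ℕ) (P : Fin (n + 1) → Measure Ω)
    (hP_prob : ∀ i, IsProbabilityMeasure (P i))
    (hP_equiv : ∀ i j, P i ≪ P j)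
    (l L : ℝ) (hl : 0 < l) (hlL : l ≤ L)
    (hRN : ∀ i j, ∀ᵐ ω ∂(P j),
      l ≤ ((P i).rnDeriv (P j) ω).toReal ∧ ((P i).rnDeriv (P j) ω).toReal ≤ L)
    (f : ℕ → Ω → ℝ)
    (hf : ∀ Q ∈ mixSet P, Supermartingale f ℱ Q)
    (φ : Ω → ℝ) (hφ_nonneg : ∀ ω, 0 ≤ φ ω)
    (hbound : ∀ m, ∀ ω, |f m ω| ≤ φ ω)
    (T : ℝ)
    (hφ_int : ∀ Q ∈ mixSet P, Integrable φ Q)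
    (hφT : ∀ Q ∈ mixSet P, ∫ ω, φ ω ∂Q < T)
    (m₀ : ℕ) (hm₀ : 1 ≤ m₀)
    (φm₀ : Ω → ℝ)
    (hφm₀_meas : StronglyMeasurable[ℱ (m₀ - 1)] φm₀)
    (hφm₀_nonneg : ∀ ω, 0 ≤ φm₀ ω)
    (hφm₀_pos : 0 < P 0 {ω | 0 < φm₀ ω})
    (hineq : ∀ i, ∀ᵐ ω ∂(P i), φm₀ ω ≤ f (m₀ - 1) ω - ((P i)[f m₀ | ℱ (m₀ - 1)]) ω)
    (C : Set (ℕ → Ω → ℝ))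
    (hCG : ∀ g ∈ C, memG ℱ (mixSet P) f g)
    (hC_chain : IsChain (gLE (mixSet P)) C)
    (hC_max : ∀ C' : Set (ℕ → Ω → ℝ), (∀ g ∈ C', memG ℱ (mixSet P) f g) →
      IsChain (gLE (mixSet P)) C' → C ⊆ C' → C' = C)
    (g0 : ℕ → Ω → ℝ) (hg0C : g0 ∈ C) (hg0max : ∀ g ∈ C, gLE (mixSet P) g g0)
    (fInf gInf : Ω → ℝ)
    (hfInf : ∀ i, ∀ᵐ ω ∂(P i), Tendsto (fun m => f m ω) atTop (nhds (fInf ω)))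
    (hgInf : ∀ i, ∀ᵐ ω ∂(P i), Tendsto (fun m => g0 m ω) atTop (nhds (gInf ω)))
    (heq : ∀ i, ∫ ω, (fInf ω + gInf ω) ∂(P i) = ∫ ω, f 0 ω ∂(P i)) :
    ∀ Q ∈ mixSet P, ∀ k m : ℕ, k ≤ m →
      (Q[(fun ω => f m ω + g0 m ω) | ℱ k]) =ᵐ[Q] fun ω => f k ω + g0 k ω :=
  stmt3_general ℱ n P hP_prob f hf φ hbound hφ_int C hCG g0 hg0C fInf gInf hfInf hgInf heq
end

section
/- Let f = (f_m) be a supermartingale relative to a convex set M of mutually equivalent probability measures such that |f_m| ≤ φ for all m, where φ ≥ 0 and E^Q φ < T < ∞ for all Q ∈ M, T independent of Q. Then f is regular — i.e., there exist a martingale (M̄_m) relative to M and a non-decreasing adapted process (g_m) with g_0 = 0 such that f_m = M̄_m − g_m for all m — if and only if there exists an adapted nonnegative random process ḡ⁰ = (ḡ⁰_m) with ḡ⁰_0 = 0 and E^P ḡ⁰_m < ∞ for all m ≥ 1 and P ∈ M, such that E^P[f_{m−1} − f_m | 𝓕_{m−1}] = E^P[ḡ⁰_m | 𝓕_{m−1}]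 a.s. for all m ≥ 1 and all P ∈ M. -/
open MeasureTheory Filter Set
open scoped ENNReal

/-! `f` is regular iff `f + g` is a martingale for some non-decreasing adapted `g` with
`g 0 = 0`. By linearity of conditional expectation, `f + g` is a martingale exactly when the
conditional expected decrease of `f` over each step equals that of the increment of `g`; so the
increments of a compensator `g` serve as `ḡ⁰`, and conversely the partial sums of `ḡ⁰` form a
compensator. -/

section

variable {Ω : Type*} {m0 : MeasurableSpace Ω} {ℱ : Filtration ℕ m0} {μ : Measure Ω}

theorem MeasureTheory.Martingale.condExp_sub_succ_eq_zero {E : Type*} [NormedAddCommGroup E]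
    [NormedSpace ℝ E] [CompleteSpace E] [SigmaFiniteFiltration μ ℱ] {h : ℕ → Ω → E}
    (hh : Martingale h ℱ μ) (m : ℕ) : μ[h (m + 1) - h m | ℱ m] =ᵐ[μ] 0 := by
  have hself : μ[h m | ℱ m] = h m :=
    condExp_of_stronglyMeasurable (ℱ.le m) (hh.stronglyAdapted m) (hh.integrable m)
  filter_upwards [condExp_sub (hh.integrable (m + 1)) (hh.integrable m) (ℱ m),
    hh.condExp_ae_eq m.le_succ] with ω hsub hstep
  simp [hsub, hself, hstep]

theorem martingale_add_iff_condExp_sub [IsFiniteMeasure μ] {f g : ℕ → Ω → ℝ}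
    (hf : StronglyAdapted ℱ f) (hf_int : ∀ m, Integrable (f m) μ)
    (hg : StronglyAdapted ℱ g) (hg_int : ∀ m, Integrable (g m) μ) :
    Martingale (f + g) ℱ μ ↔
      ∀ m, μ[f m - f (m + 1) | ℱ m] =ᵐ[μ] μ[g (m + 1) - g m | ℱ m] := by
  have hincr : ∀ m, μ[(f + g) (m + 1) - (f + g) m | ℱ m] =ᵐ[μ]
      μ[g (m + 1) - g m | ℱ m] - μ[f m - f (m + 1) | ℱ m] := fun m => by
    have hsplit : (f + g) (m + 1) - (f + g) m = (g (m + 1) - g m) - (f m - f (m + 1)) := by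
      simp only [Pi.add_apply]; abel
    rw [hsplit]
    exact condExp_sub ((hg_int _).sub (hg_int _)) ((hf_int _).sub (hf_int _)) _
  constructor
  · intro hmart m
    exact (eventuallyEq_iff_sub.2 ((hincr m).symm.trans (hmart.condExp_sub_succ_eq_zero m))).symm
  · intro hcond
    refine martingale_of_condExp_sub_eq_zero_nat (hf.add hg)
      (fun m => (hf_int m).add (hg_int m)) fun m => (hincr m).trans ?_
    exact eventuallyEq_iff_sub.1 (hcond m).symm

theorem adapted_sum_range_succ {d : ℕ → Ω → ℝ} (hd : Adapted ℱ d) :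
    Adapted ℱ fun m ω => ∑ k ∈ Finset.range m, d (k + 1) ω := fun m =>
  Finset.measurable_sum (Finset.range m) fun k hk =>
    (hd (k + 1)).mono (ℱ.mono (Finset.mem_range.1 hk)) le_rfl

end

theorem stmt4_general {Ω : Type*} {m0 : MeasurableSpace Ω}
    (ℱ : Filtration ℕ m0)
    (M : Set (Measure Ω))
    (hM_prob : ∀ P ∈ M, IsProbabilityMeasure P)
    (f : ℕ → Ω → ℝ)
    (hf : ∀ P ∈ M, Supermartingale f ℱ P) :
    (∃ (Mbar g : ℕ → Ω → ℝ),
        (∀ P ∈ M, Martingale Mbar ℱ P) ∧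
        Adapted ℱ g ∧ (∀ ω, g 0 ω = 0) ∧ (∀ ω, Monotone fun m => g m ω) ∧
        ∀ m ω, f m ω = Mbar m ω - g m ω) ↔
    (∃ gbar : ℕ → Ω → ℝ,
        Adapted ℱ gbar ∧ (∀ ω, gbar 0 ω = 0) ∧ (∀ m ω, 0 ≤ gbar m ω) ∧
        (∀ P ∈ M, ∀ m : ℕ, Integrable (gbar (m + 1)) P) ∧
        ∀ P ∈ M, ∀ m : ℕ,
          (P[(f m - f (m + 1)) | ℱ m]) =ᵐ[P] (P[gbar (m + 1) | ℱ m])) := by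
  constructor
  · rintro ⟨Mbar, g, hMbar, hg, -, hg_mono, hfg⟩
    have hMbar_eq : Mbar = f + g := funext₂ fun m ω => by simp [hfg]
    have hg_int : ∀ P ∈ M, ∀ m, Integrable (g m) P := fun P hP m => by
      simpa [hMbar_eq] using ((hMbar P hP).integrable m).sub ((hf P hP).integrable m)
    refine ⟨fun m => g m - g (m - 1),
      fun m => (hg m).sub ((hg (m - 1)).mono (ℱ.mono (m.sub_le 1)) le_rfl), by simp,
      fun m ω => sub_nonneg.2 (hg_mono ω (m.sub_le 1)),
      fun P hP m => (hg_int P hP _).sub (hg_int P hP _), fun P hP m => ?_⟩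
    have := hM_prob P hP
    rw [hMbar_eq] at hMbar
    exact (martingale_add_iff_condExp_sub (hf P hP).stronglyAdapted ((hf P hP).integrable)
      hg.stronglyAdapted (hg_int P hP)).1 (hMbar P hP) m
  · rintro ⟨gbar, hgbar, -, hgbar_nonneg, hgbar_int, hcond⟩
    set G : ℕ → Ω → ℝ := fun m ω => ∑ k ∈ Finset.range m, gbar (k + 1) ω with hG
    have hG_incr : ∀ m, G (m + 1) - G m = gbar (m + 1) := fun m =>
      funext fun ω => Finset.sum_range_succ_sub_sum _
    refine ⟨f + G, G, fun P hP => ?_, adapted_sum_range_succ hgbar, by simp [hG],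
      fun ω => monotone_nat_of_le_succ fun m => ?_, fun m ω => by simp⟩
    · have := hM_prob P hP
      refine (martingale_add_iff_condExp_sub (hf P hP).stronglyAdapted ((hf P hP).integrable)
        (adapted_sum_range_succ hgbar).stronglyAdapted
        (fun m => integrable_finsetSum _ fun k _ => hgbar_int P hP k)).2 fun m => ?_
      rw [hG_incr]
      exact hcond P hP m
    · simpa [hG, Finset.sum_range_succ] using hgbar_nonneg (m + 1) ω

/-- **Theorem `reww1` of the paper.**
Let `f` be a supermartingale relative to a convex set `M` of mutually equivalent
probability measures, dominated in absolute value by a `φ` with `E^Q φ < T` for all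
`Q ∈ M`.  Then `f` is regular — i.e. `f m = M̄ m - g m` with `M̄` a martingale
relative to `M` and `g` adapted non-decreasing, `g 0 = 0` — if and only if there is
an adapted nonnegative process `ḡ⁰` with `ḡ⁰ 0 = 0`, `E^P ḡ⁰ m < ∞`, such that
`E^P[f (m-1) - f m | ℱ (m-1)] = E^P[ḡ⁰ m | ℱ (m-1)]` a.s. for all `m ≥ 1`, `P ∈ M`. -/
theorem stmt4 {Ω : Type*} {m0 : MeasurableSpace Ω}
    (ℱ : Filtration ℕ m0) (hℱ0 : ∀ A, MeasurableSet[ℱ 0] A → A = ∅ ∨ A = Set.univ)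
    (M : Set (Measure Ω)) (hMne : M.Nonempty)
    (hM_prob : ∀ P ∈ M, IsProbabilityMeasure P)
    (hM_conv : ∀ P ∈ M, ∀ Q ∈ M, ∀ α : ℝ, 0 ≤ α → α ≤ 1 →
      (ENNReal.ofReal (1 - α)) • P + (ENNReal.ofReal α) • Q ∈ M)
    (hM_equiv : ∀ P ∈ M, ∀ Q ∈ M, P ≪ Q)
    (f : ℕ → Ω → ℝ)
    (hf : ∀ P ∈ M, Supermartingale f ℱ P)
    (φ : Ω → ℝ) (hφ_nonneg : ∀ ω, 0 ≤ φ ω)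
    (hbound : ∀ m, ∀ ω, |f m ω| ≤ φ ω)
    (T : ℝ)
    (hφ_int : ∀ Q ∈ M, Integrable φ Q)
    (hφT : ∀ Q ∈ M, ∫ ω, φ ω ∂Q < T) :
    (∃ (Mbar g : ℕ → Ω → ℝ),
        (∀ P ∈ M, Martingale Mbar ℱ P) ∧
        Adapted ℱ g ∧ (∀ ω, g 0 ω = 0) ∧ (∀ ω, Monotone fun m => g m ω) ∧
        ∀ m ω, f m ω = Mbar m ω - g m ω) ↔
    (∃ gbar : ℕ → Ω → ℝ,
        Adapted ℱ gbar ∧ (∀ ω, gbar 0 ω = 0) ∧ (∀ m ω, 0 ≤ gbar m ω) ∧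
        (∀ P ∈ M, ∀ m : ℕ, Integrable (gbar (m + 1)) P) ∧
        ∀ P ∈ M, ∀ m : ℕ,
          (P[(f m - f (m + 1)) | ℱ m]) =ᵐ[P] (P[gbar (m + 1) | ℱ m])) :=
  stmt4_general ℱ M hM_prob f hf
end

section
/- Let f = (f_m) be a supermartingale relative to a convex set M of mutually equivalent probability measures such that |f_m| ≤ φ for all m, where φ ≥ 0 and E^Q φ < T < ∞ for all Q ∈ M, T independent of Q. Then f is regular — i.e., there exists a non-decreasing adapted process g = (g_m) with g_0 = 0 such that (f_m + g_m) is a martingale relative to M — if and only if there exists a non-decreasing adapted process g = (g_m) with g_0 = 0 such that for every finite set of measures P₁, …, P_n ∈ M there exist adapted processes Ψʲ = (Ψʲ_m) with Ψʲ_0 = 0, E^{P_j}|Ψʲ_m| < ∞ and E^{P_j}[Ψʲ_m | 𝓕_{m−1}] = 0 for all m ≥ 1, such that g_m − g_{m−1} = f_{m−1} − E^{P_j}[f_m | 𝓕_{m−1}] + Ψʲ_m a.s. for all m ≥ 1 and j = 1, …, n. -/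
/-!
Write `Ψ_{m+1} = (g_{m+1} - g_m) - (f_m - E[f_{m+1} | 𝓕_m])` for the part of the increment of `g`
not predicted by the drift of `f`. Since `f_{m+1} - E[f_{m+1} | 𝓕_m]` has zero conditional
expectation, `Ψ_{m+1}` and the increment of `f + g` have the same conditional expectation given
`𝓕_m`. Hence `f + g` is a martingale under `P` exactly when `Ψ` is a martingale difference
sequence under `P`: this `Ψ` is the witness for every `P_j`, and conversely any admissible `Ψ`
agrees with it almost surely.
-/

open MeasureTheory

section Innovation

variable {Ω : Type*} {m0 : MeasurableSpace Ω} {μ : Measure Ω} {ℱ : Filtration ℕ m0}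
  {f g : ℕ → Ω → ℝ}

theorem condExp_sub_condExp_ae_eq_zero {E : Type*} [NormedAddCommGroup E] [NormedSpace ℝ E]
    [CompleteSpace E] {m : MeasurableSpace Ω} (hm : m ≤ m0) [SigmaFinite (μ.trim hm)]
    {X : Ω → E} (hX : Integrable X μ) :
    μ[X - μ[X | m] | m] =ᵐ[μ] 0 := by
  filter_upwards [condExp_sub hX integrable_condExp m] with ω hω
  rw [hω, Pi.sub_apply, condExp_of_stronglyMeasurable hm stronglyMeasurable_condExp
    integrable_condExp, sub_self, Pi.zero_apply]

theorem MeasureTheory.Martingale.condExp_sub_ae_eq_zero {ι E : Type*} [Preorder ι]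
    [NormedAddCommGroup E] [NormedSpace ℝ E] [CompleteSpace E] [IsFiniteMeasure μ]
    {𝒢 : Filtration ι m0} {h : ι → Ω → E} (hh : Martingale h 𝒢 μ) {i j : ι} (hij : i ≤ j) :
    μ[h j - h i | 𝒢 i] =ᵐ[μ] 0 := by
  filter_upwards [condExp_sub (hh.integrable j) (hh.integrable i) (𝒢 i),
    hh.condExp_ae_eq hij] with ω hsub hmart
  rw [hsub, Pi.sub_apply, hmart, condExp_of_stronglyMeasurable (𝒢.le i)
    (hh.stronglyAdapted i) (hh.integrable i), sub_self, Pi.zero_apply]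

variable (μ ℱ f g) in
noncomputable def innovation : ℕ → Ω → ℝ
  | 0 => 0
  | m + 1 => g (m + 1) - g m - (f m - μ[f (m + 1) | ℱ m])

theorem innovation_succ_apply (m : ℕ) (ω : Ω) :
    innovation μ ℱ f g (m + 1) ω = g (m + 1) ω - g m ω - (f m ω - μ[f (m + 1) | ℱ m] ω) :=
  rfl

theorem innovation_succ_eq_sub (m : ℕ) :
    innovation μ ℱ f g (m + 1) =
      ((f + g) (m + 1) - (f + g) m) - (f (m + 1) - μ[f (m + 1) | ℱ m]) := by
  funext ω
  simp only [innovation_succ_apply, Pi.add_apply, Pi.sub_apply]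
  ring

theorem adapted_innovation (hf : Adapted ℱ f) (hg : Adapted ℱ g) :
    Adapted ℱ (innovation μ ℱ f g)
  | 0 => measurable_const
  | m + 1 =>
    have hle : ℱ m ≤ ℱ (m + 1) := ℱ.mono m.le_succ
    ((hg (m + 1)).sub ((hg m).mono hle le_rfl)).sub
      (((hf m).mono hle le_rfl).sub (stronglyMeasurable_condExp.measurable.mono hle le_rfl))

theorem integrable_innovation (hf : ∀ i, Integrable (f i) μ) (hg : ∀ i, Integrable (g i) μ) :
    ∀ m, Integrable (innovation μ ℱ f g m) μ
  | 0 => integrable_zero Ω ℝ μ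
  | m + 1 => ((hg (m + 1)).sub (hg m)).sub ((hf m).sub integrable_condExp)

theorem integrable_of_integrable_innovation (hf : ∀ i, Integrable (f i) μ)
    (hg0 : Integrable (g 0) μ) (hΨ : ∀ m, Integrable (innovation μ ℱ f g (m + 1)) μ) :
    ∀ m, Integrable (g m) μ
  | 0 => hg0
  | m + 1 => by
    have hstep : g (m + 1) = g m + (f m - μ[f (m + 1) | ℱ m]) + innovation μ ℱ f g (m + 1) := by
      funext ω
      simp only [innovation_succ_apply, Pi.add_apply, Pi.sub_apply]
      ring
    rw [hstep]
    exact ((integrable_of_integrable_innovation hf hg0 hΨ m).add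
      ((hf m).sub integrable_condExp)).add (hΨ m)

theorem condExp_innovation_succ_ae_eq [IsFiniteMeasure μ] (hf : ∀ i, Integrable (f i) μ)
    (hg : ∀ i, Integrable (g i) μ) (m : ℕ) :
    μ[innovation μ ℱ f g (m + 1) | ℱ m] =ᵐ[μ] μ[(f + g) (m + 1) - (f + g) m | ℱ m] := by
  have hfg : ∀ i, Integrable ((f + g) i) μ := fun i => (hf i).add (hg i)
  rw [innovation_succ_eq_sub]
  filter_upwards [condExp_sub ((hfg (m + 1)).sub (hfg m)) ((hf (m + 1)).sub integrable_condExp) _,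
    condExp_sub_condExp_ae_eq_zero (ℱ.le m) (hf (m + 1))] with ω hsub hzero
  rw [hsub, Pi.sub_apply, hzero, Pi.zero_apply, sub_zero]

theorem martingale_add_iff_condExp_innovation [IsFiniteMeasure μ] (hf : StronglyAdapted ℱ f)
    (hfi : ∀ i, Integrable (f i) μ) (hg : Adapted ℱ g) (hgi : ∀ i, Integrable (g i) μ) :
    Martingale (f + g) ℱ μ ↔ ∀ m, μ[innovation μ ℱ f g (m + 1) | ℱ m] =ᵐ[μ] 0 := by
  refine ⟨fun hmart m => ?_, fun hΨ => ?_⟩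
  · exact (condExp_innovation_succ_ae_eq hfi hgi m).trans
      (hmart.condExp_sub_ae_eq_zero m.le_succ)
  · exact martingale_of_condExp_sub_eq_zero_nat (hf.add hg.stronglyAdapted)
      (fun i => (hfi i).add (hgi i))
      (fun m => (condExp_innovation_succ_ae_eq hfi hgi m).symm.trans (hΨ m))

end Innovation

theorem stmt5_general {Ω : Type*} {m0 : MeasurableSpace Ω}
    (ℱ : Filtration ℕ m0)
    (M : Set (Measure Ω))
    (hM_prob : ∀ P ∈ M, IsProbabilityMeasure P)
    (f : ℕ → Ω → ℝ)
    (hf : ∀ P ∈ M, Supermartingale f ℱ P) :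
    (∃ g : ℕ → Ω → ℝ,
        Adapted ℱ g ∧ (∀ ω, g 0 ω = 0) ∧ (∀ ω, Monotone fun m => g m ω) ∧
        ∀ P ∈ M, Martingale (f + g) ℱ P) ↔
    (∃ g : ℕ → Ω → ℝ,
        Adapted ℱ g ∧ (∀ ω, g 0 ω = 0) ∧ (∀ ω, Monotone fun m => g m ω) ∧
        ∀ (n : ℕ) (P : Fin (n + 1) → Measure Ω), (∀ j, P j ∈ M) →
          ∃ Ψ : Fin (n + 1) → ℕ → Ω → ℝ,
            ∀ j, Adapted ℱ (Ψ j) ∧ (∀ ω, Ψ j 0 ω = 0) ∧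
              (∀ m : ℕ, Integrable (Ψ j (m + 1)) (P j)) ∧
              (∀ m : ℕ, ((P j)[Ψ j (m + 1) | ℱ m]) =ᵐ[P j] (0 : Ω → ℝ)) ∧
              (∀ m : ℕ, ∀ᵐ ω ∂(P j),
                g (m + 1) ω - g m ω =
                  f m ω - ((P j)[f (m + 1) | ℱ m]) ω + Ψ j (m + 1) ω)) := by
  constructor
  · rintro ⟨g, hg, hg0, hmono, hmart⟩
    refine ⟨g, hg, hg0, hmono, fun n P hP => ⟨fun j => innovation (P j) ℱ f g, fun j => ?_⟩⟩
    have := hM_prob _ (hP j)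
    have hfP := hf _ (hP j)
    have hgi : ∀ i, Integrable (g i) (P j) := fun i => by
      simpa using ((hmart _ (hP j)).integrable i).sub (hfP.integrable i)
    refine ⟨adapted_innovation hfP.stronglyAdapted.adapted hg, fun _ => rfl,
      fun m => integrable_innovation hfP.integrable hgi (m + 1),
      (martingale_add_iff_condExp_innovation hfP.stronglyAdapted hfP.integrable hg hgi).1
        (hmart _ (hP j)),
      fun m => ae_of_all _ fun ω => ?_⟩
    dsimp only
    rw [innovation_succ_apply]
    ring
  · rintro ⟨g, hg, hg0, hmono, hΨ⟩
    refine ⟨g, hg, hg0, hmono, fun Q hQ => ?_⟩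
    have := hM_prob Q hQ
    have hfQ := hf Q hQ
    obtain ⟨Ψ, hΨ⟩ := hΨ 0 (fun _ => Q) (fun _ => hQ)
    obtain ⟨-, -, hΨi, hΨce, hincr⟩ := hΨ 0
    have hinn : ∀ m, innovation Q ℱ f g (m + 1) =ᵐ[Q] Ψ 0 (m + 1) := fun m => by
      filter_upwards [hincr m] with ω hω
      rw [innovation_succ_apply]
      linarith
    have hgi := integrable_of_integrable_innovation hfQ.integrable
      ((integrable_zero Ω ℝ Q).congr (ae_of_all _ fun ω => (hg0 ω).symm))
      (fun m => (hΨi m).congr (hinn m).symm)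
    exact (martingale_add_iff_condExp_innovation hfQ.stronglyAdapted hfQ.integrable hg hgi).2
      fun m => (condExp_congr_ae (hinn m)).trans (hΨce m)

/-- **Theorem `kj1` of the paper.**
Let `f` be a supermartingale relative to a convex set `M` of mutually equivalent
probability measures, dominated in absolute value by an integrable `φ` with
`E^Q φ < T` for all `Q ∈ M`.  Then `f` is regular — i.e. `f + g` is a martingale
relative to `M` for some adapted non-decreasing `g` with `g 0 = 0` — if and only if
there is an adapted non-decreasing `g` with `g 0 = 0` such that for every finite
family of measures `P j ∈ M` there are adapted processes `Ψ j` with `Ψ j 0 = 0`,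
`E^{P j}|Ψ j m| < ∞`, `E^{P j}[Ψ j m | ℱ (m-1)] = 0`, and
`g m - g (m-1) = f (m-1) - E^{P j}[f m | ℱ (m-1)] + Ψ j m` a.s. for all `m ≥ 1`. -/
theorem stmt5 {Ω : Type*} {m0 : MeasurableSpace Ω}
    (ℱ : Filtration ℕ m0) (hℱ0 : ∀ A, MeasurableSet[ℱ 0] A → A = ∅ ∨ A = Set.univ)
    (M : Set (Measure Ω)) (hMne : M.Nonempty)
    (hM_prob : ∀ P ∈ M, IsProbabilityMeasure P)
    (hM_conv : ∀ P ∈ M, ∀ Q ∈ M, ∀ α : ℝ, 0 ≤ α → α ≤ 1 →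
      (ENNReal.ofReal (1 - α)) • P + (ENNReal.ofReal α) • Q ∈ M)
    (hM_equiv : ∀ P ∈ M, ∀ Q ∈ M, P ≪ Q)
    (f : ℕ → Ω → ℝ)
    (hf : ∀ P ∈ M, Supermartingale f ℱ P)
    (φ : Ω → ℝ) (hφ_nonneg : ∀ ω, 0 ≤ φ ω)
    (hbound : ∀ m, ∀ ω, |f m ω| ≤ φ ω)
    (T : ℝ)
    (hφ_int : ∀ Q ∈ M, Integrable φ Q)
    (hφT : ∀ Q ∈ M, ∫ ω, φ ω ∂Q < T) :
    (∃ g : ℕ → Ω → ℝ,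
        Adapted ℱ g ∧ (∀ ω, g 0 ω = 0) ∧ (∀ ω, Monotone fun m => g m ω) ∧
        ∀ P ∈ M, Martingale (f + g) ℱ P) ↔
    (∃ g : ℕ → Ω → ℝ,
        Adapted ℱ g ∧ (∀ ω, g 0 ω = 0) ∧ (∀ ω, Monotone fun m => g m ω) ∧
        ∀ (n : ℕ) (P : Fin (n + 1) → Measure Ω), (∀ j, P j ∈ M) →
          ∃ Ψ : Fin (n + 1) → ℕ → Ω → ℝ,
            ∀ j, Adapted ℱ (Ψ j) ∧ (∀ ω, Ψ j 0 ω = 0) ∧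
              (∀ m : ℕ, Integrable (Ψ j (m + 1)) (P j)) ∧
              (∀ m : ℕ, ((P j)[Ψ j (m + 1) | ℱ m]) =ᵐ[P j] (0 : Ω → ℝ)) ∧
              (∀ m : ℕ, ∀ᵐ ω ∂(P j),
                g (m + 1) ω - g m ω =
                  f m ω - ((P j)[f (m + 1) | ℱ m]) ω + Ψ j (m + 1) ω)) :=
  stmt5_general ℱ M hM_prob f hf
end

section
/- Let the filtration (𝓕_n)_{n≥1} on (Ω, 𝓕) satisfy condition A and let the mutually equivalent probability measures P₁, …, P_k satisfy condition B with distinguished index i₀. Then for every l ∈ {1, …, k}, every i ∈ {1, …, k} and every n ≥ 1, almost surely: (dP_i/dP_l) / E^{P_l}[dP_i/dP_l | 𝓕_n] ≤ (dP_{i₀}/dP_l) / E^{P_l}[dP_{i₀}/dP_l | 𝓕_n]. -/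
open MeasureTheory Filter Set
open scoped ENNReal

/-- **Condition A** of the paper: `𝓕` is generated by `⋃ n, ℱ n` and each `ℱ n` is
generated by a countable measurable partition `(A n s)_s` of `Ω` which is refined by
the partition at time `n + 1` according to the index sets `I n s`. -/
structure CondA {Ω : Type*} (m0 : MeasurableSpace Ω) (ℱ : MeasureTheory.Filtration ℕ m0)
    (A : ℕ → ℕ → Set Ω) (I : ℕ → ℕ → Set ℕ) : Prop where
  gen_top : (⨆ n, (ℱ n : MeasurableSpace Ω)) = m0
  gen : ∀ n, (ℱ n : MeasurableSpace Ω) = MeasurableSpace.generateFrom (Set.range (A n))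
  disj : ∀ n, Pairwise (Function.onFun Disjoint (A n))
  cover : ∀ n, (⋃ s, A n s) = Set.univ
  idisj : ∀ n, Pairwise (Function.onFun Disjoint (I n))
  icover : ∀ n, (⋃ s, I n s) = Set.univ
  refines : ∀ n s, A n s = ⋃ j ∈ I n s, A (n + 1) j

/-- **Condition B** of the paper for the measures `P i`, with distinguished index `i₀`:
`P 0 (A n s) > 0` and the conditional measures of the cells are dominated by those of
`P i₀`. -/
structure CondB {Ω : Type*} {m0 : MeasurableSpace Ω} {k : ℕ}
    (P : Fin (k + 1) → MeasureTheory.Measure Ω)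
    (A : ℕ → ℕ → Set Ω) (I : ℕ → ℕ → Set ℕ) (i₀ : Fin (k + 1)) : Prop where
  pos : ∀ n s, 0 < P 0 (A n s)
  dom : ∀ (i : Fin (k + 1)) (n s j : ℕ), j ∈ I n s →
    (P i (A (n + 1) j)).toReal / (P i (A n s)).toReal ≤
    (P i₀ (A (n + 1) j)).toReal / (P i₀ (A n s)).toReal

open scoped Topology

/-!
On the cell `A n s` of `ℱ n` containing `ω`, every `ℱ n`-measurable function is constant, so
`E^{P l}[dP j/dP l | ℱ n] ω = P j (A n s) / P l (A n s)`. For `m ≥ n` the quotient of these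
expectations at times `m` and `n` is, up to a factor independent of `j`, the ratio
`P j (A m ·) / P j (A n ·)`, a product of one-step ratios each dominated for `j = i` by the one
for `j = i₀` (condition B). Lévy's upward theorem, applicable since `⨆ n, ℱ n = m0`, lets `m → ∞`.
-/

namespace MeasurableSpace

variable {Ω : Type*}

lemma subset_or_disjoint_of_measurableSet_generateFrom_range {B : ℕ → Set Ω}
    (hB : Pairwise (Function.onFun Disjoint B)) {S : Set Ω}
    (hS : MeasurableSet[generateFrom (range B)] S) (s : ℕ) :
    B s ⊆ S ∨ Disjoint (B s) S := by
  induction S, hS using generateFrom_induction with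
  | hC _ ht =>
    obtain ⟨t, rfl⟩ := ht
    rcases eq_or_ne s t with rfl | hst
    exacts [.inl subset_rfl, .inr (hB hst)]
  | empty => exact .inr (disjoint_empty _)
  | compl _ _ ih =>
    rw [subset_compl_iff_disjoint_right, disjoint_compl_right_iff_subset]
    exact ih.symm
  | iUnion S _ ih =>
    by_cases h : ∃ i, B s ⊆ S i
    · obtain ⟨i, hi⟩ := h
      exact .inl (hi.trans (subset_iUnion S i))
    · simp only [not_exists] at h
      exact .inr (disjoint_iUnion_right.2 fun i => (ih i).resolve_left (h i))

end MeasurableSpace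

namespace MeasureTheory

variable {Ω : Type*} {m m0 : MeasurableSpace Ω} {μ : Measure Ω} {B : Set Ω} {x : Ω}

/-- `hB_atom` says that `B` lies in the `m`-atom of `x`, on which `m`-measurable functions are
constant. -/
lemma condExp_eq_setAverage_of_atom (hm : m ≤ m0) [IsFiniteMeasure μ] {f : Ω → ℝ}
    (hf : Integrable f μ) (hB : MeasurableSet[m] B)
    (hB_atom : ∀ S, MeasurableSet[m] S → x ∈ S → B ⊆ S) (hμB : μ B ≠ 0) :
    μ[f | m] x = ⨍ y in B, f y ∂μ := by
  have hconst : ∀ y ∈ B, μ[f | m] y = μ[f | m] x := fun y hy =>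
    hB_atom _ (stronglyMeasurable_condExp.measurable (measurableSet_singleton _)) rfl hy
  have hμB' : μ.real B ≠ 0 := (measureReal_ne_zero_iff (measure_ne_top μ B)).2 hμB
  rw [setAverage_eq, ← setIntegral_condExp hm hf hB,
    setIntegral_congr_fun (hm B hB) hconst, setIntegral_const, smul_eq_mul, smul_eq_mul,
    inv_mul_cancel_left₀ hμB']

lemma condExp_toReal_rnDeriv_eq_of_atom (hm : m ≤ m0) [IsFiniteMeasure μ] {ν : Measure Ω}
    [IsFiniteMeasure ν] (hνμ : ν ≪ μ) (hB : MeasurableSet[m] B)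
    (hB_atom : ∀ S, MeasurableSet[m] S → x ∈ S → B ⊆ S) (hμB : μ B ≠ 0) :
    μ[fun y => (ν.rnDeriv μ y).toReal | m] x = ν.real B / μ.real B := by
  rw [condExp_eq_setAverage_of_atom hm Measure.integrable_toReal_rnDeriv hB hB_atom hμB,
    setAverage_eq, Measure.setIntegral_toReal_rnDeriv hνμ, smul_eq_mul, inv_mul_eq_div]

end MeasureTheory

section Ratios

variable {x y z : ℕ → ℝ}

lemma antitone_div_of_succ_div_le (hx : ∀ m, 0 < x m) (hy : ∀ m, 0 < y m)
    (h : ∀ m, x (m + 1) / x m ≤ y (m + 1) / y m) : Antitone fun m => x m / y m := by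
  refine antitone_nat_of_succ_le fun m => ?_
  have := h m
  rw [div_le_div_iff₀ (hx m) (hy m)] at this
  rw [div_le_div_iff₀ (hy (m + 1)) (hy m)]
  linarith

/-- For `m ≥ n` the quotients before the limit differ by the factor
`(x m / y m) / (x n / y n) ≤ 1`. -/
lemma div_le_div_of_tendsto_of_antitone (hx : ∀ m, 0 < x m) (hy : ∀ m, 0 < y m)
    (hz : ∀ m, 0 < z m) {a b : ℝ} (ha : Tendsto (fun m => x m / z m) atTop (𝓝 a))
    (hb : Tendsto (fun m => y m / z m) atTop (𝓝 b)) (hxy : Antitone fun m => x m / y m)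
    (n : ℕ) : a / (x n / z n) ≤ b / (y n / z n) := by
  refine le_of_tendsto_of_tendsto (ha.div_const _) (hb.div_const _)
    (eventually_atTop.2 ⟨n, fun m hm => ?_⟩)
  have hxy' : x m * y n ≤ y m * x n := by
    have := hxy hm
    rwa [div_le_div_iff₀ (hy m) (hy n), mul_comm (x n)] at this
  change x m / z m / (x n / z n) ≤ y m / z m / (y n / z n)
  rw [div_le_div_iff₀ (div_pos (hx n) (hz n)) (div_pos (hy n) (hz n)), div_mul_div_comm,
    div_mul_div_comm]
  exact div_le_div_of_nonneg_right hxy' (mul_pos (hz m) (hz n)).le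

end Ratios

section Conditions

variable {Ω : Type*} {m0 : MeasurableSpace Ω} {ℱ : Filtration ℕ m0} {A : ℕ → ℕ → Set Ω}
  {I : ℕ → ℕ → Set ℕ}

lemma CondA.exists_mem (hA : CondA m0 ℱ A I) (n : ℕ) (ω : Ω) : ∃ s, ω ∈ A n s :=
  mem_iUnion.1 (hA.cover n ▸ mem_univ ω)

lemma CondA.mem_index_of_mem (hA : CondA m0 ℱ A I) {n s j : ℕ} {ω : Ω} (hs : ω ∈ A n s)
    (hj : ω ∈ A (n + 1) j) : j ∈ I n s := by
  obtain ⟨s', hs'⟩ := mem_iUnion.1 (hA.icover n ▸ mem_univ j)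
  have hs'ω : ω ∈ A n s' := hA.refines n s' ▸ mem_biUnion hs' hj
  obtain rfl : s = s' := by_contra fun hne => disjoint_left.1 (hA.disj n hne) hs hs'ω
  exact hs'

lemma CondA.condExp_toReal_rnDeriv_eq (hA : CondA m0 ℱ A I) {μ ν : Measure Ω}
    [IsFiniteMeasure μ] [IsFiniteMeasure ν] (hνμ : ν ≪ μ) {n s : ℕ} {ω : Ω}
    (hω : ω ∈ A n s) (hμ : μ (A n s) ≠ 0) :
    μ[fun y => (ν.rnDeriv μ y).toReal | ℱ n] ω = ν.real (A n s) / μ.real (A n s) := by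
  have hgen := hA.gen n
  have hA_meas : MeasurableSet[ℱ n] (A n s) :=
    hgen ▸ MeasurableSpace.measurableSet_generateFrom ⟨s, rfl⟩
  refine condExp_toReal_rnDeriv_eq_of_atom (ℱ.le n) hνμ hA_meas (fun S hS hωS => ?_) hμ
  rw [hgen] at hS
  exact (MeasurableSpace.subset_or_disjoint_of_measurableSet_generateFrom_range (hA.disj n) hS s
    ).resolve_right (not_disjoint_iff.2 ⟨ω, hω, hωS⟩)

lemma CondB.measure_pos {k : ℕ} {P : Fin (k + 1) → Measure Ω} {i₀ : Fin (k + 1)}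
    (hB : CondB P A I i₀) {i : Fin (k + 1)} (hP : P 0 ≪ P i) (n s : ℕ) : 0 < P i (A n s) :=
  pos_iff_ne_zero.2 fun h => (hB.pos n s).ne' (hP h)

end Conditions

/-- **Lemma `mq10` of the paper.**
Under conditions A and B, for all `l`, `i` and `n`, almost surely
`(dP i/dP l) / E^{P l}[dP i/dP l | ℱ n] ≤ (dP i₀/dP l) / E^{P l}[dP i₀/dP l | ℱ n]`. -/
theorem stmt9 {Ω : Type*} {m0 : MeasurableSpace Ω}
    (ℱ : Filtration ℕ m0) (A : ℕ → ℕ → Set Ω) (I : ℕ → ℕ → Set ℕ)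
    (hA : CondA m0 ℱ A I)
    (k : ℕ) (P : Fin (k + 1) → Measure Ω)
    (hP_prob : ∀ i, IsProbabilityMeasure (P i))
    (hP_equiv : ∀ i j, P i ≪ P j)
    (i₀ : Fin (k + 1)) (hB : CondB P A I i₀) :
    ∀ l i : Fin (k + 1), ∀ n : ℕ, ∀ᵐ ω ∂(P l),
      ((P i).rnDeriv (P l) ω).toReal /
        (((P l)[fun ω' => ((P i).rnDeriv (P l) ω').toReal | ℱ n]) ω) ≤
      ((P i₀).rnDeriv (P l) ω).toReal /
        (((P l)[fun ω' => ((P i₀).rnDeriv (P l) ω').toReal | ℱ n]) ω) := by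
  intro l i n
  have hlevy : ∀ j, ∀ᵐ ω ∂(P l), Tendsto
      (fun m => (P l)[fun ω' => ((P j).rnDeriv (P l) ω').toReal | ℱ m] ω) atTop
      (𝓝 ((P j).rnDeriv (P l) ω).toReal) := fun j =>
    Measure.integrable_toReal_rnDeriv.tendsto_ae_condExp <| by
      rw [hA.gen_top]
      exact (Measure.measurable_rnDeriv _ _).ennreal_toReal.stronglyMeasurable
  filter_upwards [hlevy i, hlevy i₀] with ω hi hi₀
  choose c hc using fun m => hA.exists_mem m ω
  have hpos : ∀ j m, 0 < (P j).real (A m (c m)) := fun j m =>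
    ENNReal.toReal_pos (hB.measure_pos (hP_equiv 0 j) m _).ne' (measure_ne_top _ _)
  have hE : ∀ j m, (P l)[fun ω' => ((P j).rnDeriv (P l) ω').toReal | ℱ m] ω
      = (P j).real (A m (c m)) / (P l).real (A m (c m)) := fun j m =>
    hA.condExp_toReal_rnDeriv_eq (hP_equiv j l) (hc m) (hB.measure_pos (hP_equiv 0 l) m _).ne'
  simp only [hE] at hi hi₀ ⊢
  exact div_le_div_of_tendsto_of_antitone (hpos i) (hpos i₀) (hpos l) hi hi₀
    (antitone_div_of_succ_div_le (hpos i) (hpos i₀) fun m =>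
      hB.dom i m _ _ (hA.mem_index_of_mem (hc m) (hc (m + 1)))) n
end

section
/- Let the filtration (𝓕_n)_{n≥1} on (Ω, 𝓕) satisfy condition A and let the mutually equivalent probability measures P₁, …, P_k satisfy condition B with distinguished index i₀. Let ξ be a nonnegative bounded random variable on (Ω, 𝓕). Then for every l ∈ {1, …, k} and all n > m, almost surely: E^{P_l}[ max_{1≤i≤k} E^{P_i}[ξ | 𝓕_n] | 𝓕_m ] = max_{1≤i≤k} E^{P_l}[ ξ φ_n^{P_i} | 𝓕_m ], where φ_n^{P_i} = (dP_i/dP_l) · (E^{P_l}[dP_i/dP_l | 𝓕_n])^{−1}. -/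
/-!
Condition B forces every `P i` to give the children of an atom the same conditional
probabilities: for each `i` these sum to one, and those of `P i₀` dominate them termwise.
Hence on every atom of `ℱ n` all the `P i` are proportional, i.e. `dP i/dP l` is
`ℱ n`-measurable. By Bayes' formula `E^{P i}[ξ | ℱ n] = E^{P l}[ξ | ℱ n]`, and
`φ_n^{P i} = 1`, so both sides equal `E^{P l}[ξ | ℱ m]`.
-/

open MeasureTheory Filter Set
open scoped ENNReal

lemma ENNReal.eq_of_forall_le_of_tsum_eq {α : Type*} {f g : α → ℝ≥0∞} (hfg : ∀ a, f a ≤ g a)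
    (hsum : ∑' a, f a = ∑' a, g a) (hfin : ∑' a, f a ≠ ∞) (a : α) : f a = g a :=
  (hfg a).eq_of_not_lt fun hlt => (ENNReal.tsum_lt_tsum hfin hfg hlt).ne hsum

lemma ENNReal.div_mul_div_cancel {a b c : ℝ≥0∞} (hb : b ≠ 0) (hb' : b ≠ ∞) :
    a / b * (b / c) = a / c := by
  simp only [div_eq_mul_inv]
  rw [mul_assoc, ← mul_assoc b⁻¹, ENNReal.inv_mul_cancel hb hb', one_mul]

lemma integrable_of_absolutelyContinuous_of_ae_norm_le {Ω : Type*} {m0 : MeasurableSpace Ω}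
    {μ ν : Measure Ω} [IsFiniteMeasure ν] (hνμ : ν ≪ μ) {f : Ω → ℝ} (hf : Integrable f μ)
    {C : ℝ} (hC : ∀ᵐ ω ∂μ, ‖f ω‖ ≤ C) : Integrable f ν :=
  Integrable.of_bound (hf.1.mono_ac hνμ) C (hνμ.ae_le hC)

lemma withDensity_tsum_indicator_eq {Ω : Type*} {m0 : MeasurableSpace Ω} {μ ν : Measure Ω}
    {E : ℕ → Set Ω} (hE : ∀ s, MeasurableSet (E s)) (hdisj : Pairwise (Function.onFun Disjoint E))
    (hcover : ⋃ s, E s = univ) {c : ℕ → ℝ≥0∞} (h : ∀ s, ν.restrict (E s) = c s • μ.restrict (E s)) :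
    μ.withDensity (∑' s, (E s).indicator fun _ => c s) = ν := by
  rw [withDensity_tsum fun s => measurable_const.indicator (hE s),
    ← Measure.restrict_univ (μ := ν), ← hcover, Measure.restrict_iUnion hdisj hE]
  congr 1
  funext s
  rw [withDensity_indicator (hE s), withDensity_const, h s]

lemma condExp_ae_eq_condExp_of_aestronglyMeasurable_rnDeriv {Ω : Type*} {m m0 : MeasurableSpace Ω}
    (hm : m ≤ m0) {μ ν : Measure Ω} [IsFiniteMeasure μ] [IsFiniteMeasure ν] (hνμ : ν ≪ μ)
    (hd : AEStronglyMeasurable[m] (fun ω => (ν.rnDeriv μ ω).toReal) μ) {f : Ω → ℝ}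
    (hfμ : Integrable f μ) (hfν : Integrable f ν) (hcond : Integrable (μ[f|m]) ν) :
    ν[f|m] =ᵐ[ν] μ[f|m] := by
  set d : Ω → ℝ := fun ω => (ν.rnDeriv μ ω).toReal
  have hdf : Integrable (d * f) μ := (integrable_rnDeriv_smul_iff hνμ).2 hfν
  refine (ae_eq_condExp_of_forall_setIntegral_eq hm hfν (fun s _ _ => hcond.integrableOn)
    (fun s hs _ => ?_) stronglyMeasurable_condExp.aestronglyMeasurable).symm
  have hs0 : MeasurableSet[m0] s := hm s hs
  calc ∫ ω in s, (μ[f|m]) ω ∂ν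
      = ∫ ω in s, (d * μ[f|m]) ω ∂μ := (setIntegral_rnDeriv_smul hνμ hs0).symm
    _ = ∫ ω in s, (μ[d * f|m]) ω ∂μ :=
        setIntegral_congr_ae hs0 <| (condExp_mul_of_aestronglyMeasurable_left hd hdf hfμ).mono
          fun ω hω _ => hω.symm
    _ = ∫ ω in s, (d * f) ω ∂μ := setIntegral_condExp hm hdf hs
    _ = ∫ ω in s, f ω ∂ν := setIntegral_rnDeriv_smul hνμ hs0

lemma condExp_ae_eq_condExp_of_norm_le {Ω : Type*} {m m0 : MeasurableSpace Ω}
    (hm : m ≤ m0) {μ ν : Measure Ω} [IsFiniteMeasure μ] [IsFiniteMeasure ν] (hνμ : ν ≪ μ)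
    (hμν : μ ≪ ν) (hd : AEStronglyMeasurable[m] (fun ω => (ν.rnDeriv μ ω).toReal) μ)
    {f : Ω → ℝ} {C : ℝ} (hC : ∀ ω, ‖f ω‖ ≤ C) : ν[f|m] =ᵐ[μ] μ[f|m] := by
  by_cases hfμ : Integrable f μ
  · have hcond : ∀ᵐ ω ∂μ, ‖(μ[f|m]) ω‖ ≤ C := by
      simpa only [Real.norm_eq_abs] using
        ae_bdd_abs_condExp_of_ae_bdd_abs (m := m) (ae_of_all μ hC)
    exact hμν.ae_eq <| condExp_ae_eq_condExp_of_aestronglyMeasurable_rnDeriv hm hνμ hd hfμ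
      (integrable_of_absolutelyContinuous_of_ae_norm_le hνμ hfμ (ae_of_all μ hC))
      (integrable_of_absolutelyContinuous_of_ae_norm_le hνμ integrable_condExp hcond)
  · have hfν : ¬ Integrable f ν := fun hfν =>
      hfμ (integrable_of_absolutelyContinuous_of_ae_norm_le hμν hfν (ae_of_all ν hC))
    rw [condExp_of_not_integrable hfμ, condExp_of_not_integrable hfν]

lemma toReal_rnDeriv_mul_inv_condExp_ae_eq_one {Ω : Type*} {m m0 : MeasurableSpace Ω}
    (hm : m ≤ m0) {μ ν : Measure Ω} [IsFiniteMeasure μ] [IsFiniteMeasure ν] (hμν : μ ≪ ν)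
    (hd : AEStronglyMeasurable[m] (fun ω => (ν.rnDeriv μ ω).toReal) μ) :
    (fun ω => (ν.rnDeriv μ ω).toReal * (μ[fun ω => (ν.rnDeriv μ ω).toReal|m] ω)⁻¹) =ᵐ[μ] 1 := by
  filter_upwards [condExp_of_aestronglyMeasurable' hm hd Measure.integrable_toReal_rnDeriv,
    Measure.rnDeriv_pos' hμν, Measure.rnDeriv_lt_top ν μ] with ω hcond hpos hfin
  rw [hcond, Pi.one_apply, mul_inv_cancel₀ (ENNReal.toReal_pos hpos.ne' hfin.ne).ne']

lemma ae_eq_iSup_of_forall_ae_eq {Ω ι : Type*} [Countable ι] [Nonempty ι] {m0 : MeasurableSpace Ω}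
    {μ : Measure Ω} {f : ι → Ω → ℝ} {g : Ω → ℝ} (h : ∀ i, f i =ᵐ[μ] g) :
    (fun ω => ⨆ i, f i ω) =ᵐ[μ] g := by
  filter_upwards [ae_all_iff.2 h] with ω hω
  simp only [hω, ciSup_const]

def atomsFrom {Ω : Type*} (A : ℕ → ℕ → Set Ω) (n : ℕ) : Set (Set Ω) :=
  {B | ∃ m ≥ n, ∃ t, A m t = B}

namespace CondA

variable {Ω : Type*} {m0 : MeasurableSpace Ω} {ℱ : Filtration ℕ m0}
  {A : ℕ → ℕ → Set Ω} {I : ℕ → ℕ → Set ℕ}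

lemma measurableSet_atom (hA : CondA m0 ℱ A I) (n s : ℕ) : MeasurableSet[ℱ n] (A n s) := by
  rw [hA.gen n]
  exact MeasurableSpace.measurableSet_generateFrom ⟨s, rfl⟩

lemma measurableSet_atom' (hA : CondA m0 ℱ A I) (n s : ℕ) : MeasurableSet (A n s) :=
  ℱ.le n _ (hA.measurableSet_atom n s)

lemma exists_mem_index (hA : CondA m0 ℱ A I) (n t : ℕ) : ∃ u, t ∈ I n u :=
  mem_iUnion.1 (hA.icover n ▸ mem_univ t)

lemma atom_subset_of_mem_index (hA : CondA m0 ℱ A I) {n u t : ℕ} (ht : t ∈ I n u) :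
    A (n + 1) t ⊆ A n u := by
  rw [hA.refines n u]
  exact subset_biUnion_of_mem ht

lemma exists_atom_superset (hA : CondA m0 ℱ A I) {n m : ℕ} (hnm : n ≤ m) (t : ℕ) :
    ∃ s, A m t ⊆ A n s := by
  induction m, hnm using Nat.le_induction generalizing t with
  | base => exact ⟨t, subset_rfl⟩
  | succ m _ ih =>
    obtain ⟨u, hu⟩ := hA.exists_mem_index m t
    obtain ⟨s, hs⟩ := ih u
    exact ⟨s, (hA.atom_subset_of_mem_index hu).trans hs⟩

lemma atom_subset_or_disjoint (hA : CondA m0 ℱ A I) {n m : ℕ} (hnm : n ≤ m) (t s : ℕ) :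
    A m t ⊆ A n s ∨ Disjoint (A m t) (A n s) := by
  obtain ⟨s', hs'⟩ := hA.exists_atom_superset hnm t
  rcases eq_or_ne s' s with rfl | hne
  · exact Or.inl hs'
  · exact Or.inr ((hA.disj n hne).mono_left hs')

lemma measure_atom_eq_tsum (hA : CondA m0 ℱ A I) (μ : Measure Ω) (n s : ℕ) :
    μ (A n s) = ∑' j : I n s, μ (A (n + 1) j) := by
  rw [hA.refines n s, biUnion_eq_iUnion]
  exact measure_iUnion (fun a b hab => hA.disj (n + 1) (Subtype.coe_injective.ne hab))
    fun j => hA.measurableSet_atom' (n + 1) j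

lemma isPiSystem_atomsFrom (hA : CondA m0 ℱ A I) (n : ℕ) : IsPiSystem (atomsFrom A n) := by
  have key : ∀ {m₁ m₂ t₁ t₂}, n ≤ m₁ → m₁ ≤ m₂ → (A m₁ t₁ ∩ A m₂ t₂).Nonempty →
      A m₁ t₁ ∩ A m₂ t₂ ∈ atomsFrom A n := fun hn h₁₂ hne => by
    rcases hA.atom_subset_or_disjoint h₁₂ _ _ with hsub | hdisj
    · exact ⟨_, hn.trans h₁₂, _, (inter_eq_right.2 hsub).symm⟩
    · exact absurd (hdisj.symm.inter_eq) hne.ne_empty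
  rintro _ ⟨m₁, hm₁, t₁, rfl⟩ _ ⟨m₂, hm₂, t₂, rfl⟩ hne
  rcases le_total m₁ m₂ with h₁₂ | h₂₁
  · exact key hm₁ h₁₂ hne
  · rw [inter_comm] at hne ⊢
    exact key hm₂ h₂₁ hne

lemma generateFrom_atomsFrom (hA : CondA m0 ℱ A I) (n : ℕ) :
    MeasurableSpace.generateFrom (atomsFrom A n) = m0 := by
  refine le_antisymm (MeasurableSpace.generateFrom_le ?_) ?_
  · rintro _ ⟨m, -, t, rfl⟩
    exact hA.measurableSet_atom' m t
  · rw [← hA.gen_top]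
    refine iSup_le fun m => (ℱ.mono (le_max_left m n)).trans ?_
    rw [hA.gen]
    exact MeasurableSpace.generateFrom_mono
      (by rintro _ ⟨t, rfl⟩; exact ⟨_, le_max_right m n, t, rfl⟩)

end CondA

namespace CondB

variable {Ω : Type*} {m0 : MeasurableSpace Ω} {ℱ : Filtration ℕ m0}
  {A : ℕ → ℕ → Set Ω} {I : ℕ → ℕ → Set ℕ} {k : ℕ} {P : Fin (k + 1) → Measure Ω}
  {i₀ : Fin (k + 1)}

lemma atom_nonempty (hB : CondB P A I i₀) (n s : ℕ) : (A n s).Nonempty :=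
  nonempty_of_measure_ne_zero (hB.pos n s).ne'

lemma measure_atom_ne_zero (hB : CondB P A I i₀) (hP : ∀ i, P 0 ≪ P i) (i : Fin (k + 1))
    (n s : ℕ) : P i (A n s) ≠ 0 :=
  fun h => (hB.pos n s).ne' (hP i h)

variable [∀ i, IsFiniteMeasure (P i)]

lemma measure_child_div_eq (hA : CondA m0 ℱ A I) (hB : CondB P A I i₀) (hP : ∀ i, P 0 ≪ P i)
    (i : Fin (k + 1)) {n s j : ℕ} (hj : j ∈ I n s) :
    P i (A (n + 1) j) / P i (A n s) = P i₀ (A (n + 1) j) / P i₀ (A n s) := by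
  have hsum : ∀ i', ∑' j' : I n s, P i' (A (n + 1) j') / P i' (A n s) = 1 := fun i' => by
    simp only [div_eq_mul_inv]
    rw [ENNReal.tsum_mul_right, ← hA.measure_atom_eq_tsum,
      ENNReal.mul_inv_cancel (hB.measure_atom_ne_zero hP i' n s) (measure_ne_top _ _)]
  refine ENNReal.eq_of_forall_le_of_tsum_eq (fun j' => ?_) ((hsum i).trans (hsum i₀).symm)
    ((hsum i).symm ▸ ENNReal.one_ne_top) ⟨j, hj⟩
  have hdiv_ne_top : ∀ i', P i' (A (n + 1) j') / P i' (A n s) ≠ ∞ := fun i' =>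
    ENNReal.div_ne_top (measure_ne_top _ _) (hB.measure_atom_ne_zero hP i' n s)
  have hdom := hB.dom i n s j' j'.2
  rwa [← ENNReal.toReal_div, ← ENNReal.toReal_div,
    ENNReal.toReal_le_toReal (hdiv_ne_top i) (hdiv_ne_top i₀)] at hdom

lemma measure_div_eq_of_subset (hA : CondA m0 ℱ A I) (hB : CondB P A I i₀) (hP : ∀ i, P 0 ≪ P i)
    (i : Fin (k + 1)) {n m : ℕ} (hnm : n ≤ m) {s t : ℕ} (hsub : A m t ⊆ A n s) :
    P i (A m t) / P i (A n s) = P i₀ (A m t) / P i₀ (A n s) := by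
  induction m, hnm using Nat.le_induction generalizing t with
  | base =>
    obtain rfl : t = s := by
      by_contra hne
      exact (hB.atom_nonempty n t).ne_empty ((hA.disj n hne).eq_bot_of_le hsub)
    rw [ENNReal.div_self (hB.measure_atom_ne_zero hP i n t) (measure_ne_top _ _),
      ENNReal.div_self (hB.measure_atom_ne_zero hP i₀ n t) (measure_ne_top _ _)]
  | succ m hnm ih =>
    obtain ⟨u, hu⟩ := hA.exists_mem_index m t
    have htu := hA.atom_subset_of_mem_index hu
    have hus : A m u ⊆ A n s := (hA.atom_subset_or_disjoint hnm u s).resolve_right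
      fun hdisj => (hB.atom_nonempty (m + 1) t).ne_empty (disjoint_self.1 (hdisj.mono htu hsub))
    have hchain : ∀ i', P i' (A (m + 1) t) / P i' (A m u) * (P i' (A m u) / P i' (A n s)) =
        P i' (A (m + 1) t) / P i' (A n s) := fun i' =>
      ENNReal.div_mul_div_cancel (hB.measure_atom_ne_zero hP i' m u) (measure_ne_top _ _)
    rw [← hchain, ← hchain, hB.measure_child_div_eq hA hP i hu, ih hus]

lemma measure_atom_eq_div_mul (hA : CondA m0 ℱ A I) (hB : CondB P A I i₀) (hP : ∀ i, P 0 ≪ P i)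
    (i l : Fin (k + 1)) {n m : ℕ} (hnm : n ≤ m) {s t : ℕ} (hsub : A m t ⊆ A n s) :
    P i (A m t) = P i (A n s) / P l (A n s) * P l (A m t) := by
  have h := (hB.measure_div_eq_of_subset hA hP i hnm hsub).trans
    (hB.measure_div_eq_of_subset hA hP l hnm hsub).symm
  calc P i (A m t)
      = P i (A m t) / P i (A n s) * P i (A n s) :=
        (ENNReal.div_mul_cancel (hB.measure_atom_ne_zero hP i n s) (measure_ne_top _ _)).symm
    _ = P i (A n s) / P l (A n s) * P l (A m t) := by
        rw [h, mul_comm, ENNReal.mul_comm_div, ← ENNReal.mul_comm_div]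

lemma restrict_atom_eq_smul (hA : CondA m0 ℱ A I) (hB : CondB P A I i₀) (hP : ∀ i, P 0 ≪ P i)
    (i l : Fin (k + 1)) (n s : ℕ) :
    (P i).restrict (A n s) = (P i (A n s) / P l (A n s)) • (P l).restrict (A n s) := by
  have hs := hA.measurableSet_atom' n s
  refine ext_of_generate_finite _ (hA.generateFrom_atomsFrom n).symm (hA.isPiSystem_atomsFrom n)
    ?_ ?_
  · rintro _ ⟨m, hnm, t, rfl⟩
    rw [Measure.smul_apply, smul_eq_mul, Measure.restrict_apply (hA.measurableSet_atom' m t),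
      Measure.restrict_apply (hA.measurableSet_atom' m t)]
    rcases hA.atom_subset_or_disjoint hnm t s with hsub | hdisj
    · rw [inter_eq_left.2 hsub]
      exact hB.measure_atom_eq_div_mul hA hP i l hnm hsub
    · rw [hdisj.inter_eq, measure_empty, measure_empty, mul_zero]
  · rw [Measure.smul_apply, smul_eq_mul, Measure.restrict_apply_univ,
      Measure.restrict_apply_univ,
      ENNReal.div_mul_cancel (hB.measure_atom_ne_zero hP l n s) (measure_ne_top _ _)]

lemma aestronglyMeasurable_toReal_rnDeriv (hA : CondA m0 ℱ A I) (hB : CondB P A I i₀)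
    (hP : ∀ i, P 0 ≪ P i) (i l : Fin (k + 1)) (n : ℕ) :
    AEStronglyMeasurable[ℱ n] (fun ω => ((P i).rnDeriv (P l) ω).toReal) (P l) := by
  set H : Ω → ℝ≥0∞ := ∑' s, (A n s).indicator fun _ => P i (A n s) / P l (A n s)
  have hH : Measurable[ℱ n] H := by
    let : MeasurableSpace Ω := ℱ n
    exact Measurable.tsum' fun s => measurable_const.indicator (hA.measurableSet_atom n s)
  have hPi : (P l).withDensity H = P i := withDensity_tsum_indicator_eq
    (hA.measurableSet_atom' n) (hA.disj n) (hA.cover n) (hB.restrict_atom_eq_smul hA hP i l n)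
  refine ⟨fun ω => (H ω).toReal, hH.ennreal_toReal.stronglyMeasurable, ?_⟩
  filter_upwards [hPi ▸ Measure.rnDeriv_withDensity (P l) (hH.mono (ℱ.le n) le_rfl)] with ω hω
  rw [hω]

end CondB

/-- **Lemma `q3` of the paper.**
Under conditions A and B, for a nonnegative bounded random variable `ξ`, every `l`
and all `n > m`, almost surely
`E^{P l}[max_i E^{P i}[ξ|ℱ n] | ℱ m] = max_i E^{P l}[ξ φ_n^{P i} | ℱ m]`, where
`φ_n^{P i} = (dP i/dP l) ⬝ (E^{P l}[dP i/dP l | ℱ n])⁻¹`. -/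
theorem stmt11 {Ω : Type*} {m0 : MeasurableSpace Ω}
    (ℱ : Filtration ℕ m0) (A : ℕ → ℕ → Set Ω) (I : ℕ → ℕ → Set ℕ)
    (hA : CondA m0 ℱ A I)
    (k : ℕ) (P : Fin (k + 1) → Measure Ω)
    (hP_prob : ∀ i, IsProbabilityMeasure (P i))
    (hP_equiv : ∀ i j, P i ≪ P j)
    (i₀ : Fin (k + 1)) (hB : CondB P A I i₀)
    (ξ : Ω → ℝ) (hξ_nonneg : ∀ ω, 0 ≤ ξ ω) (hξ_bdd : ∃ C : ℝ, ∀ ω, ξ ω ≤ C) :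
    ∀ l : Fin (k + 1), ∀ m n : ℕ, m < n →
      ((P l)[(fun ω => ⨆ i : Fin (k + 1), ((P i)[ξ | ℱ n]) ω) | ℱ m]) =ᵐ[P l]
      fun ω => ⨆ i : Fin (k + 1),
        (((P l)[(fun ω' => ξ ω' * (((P i).rnDeriv (P l) ω').toReal *
          (((P l)[fun ω'' => ((P i).rnDeriv (P l) ω'').toReal | ℱ n]) ω')⁻¹)) | ℱ m]) ω) := by
  intro l m n hmn
  obtain ⟨C, hC⟩ := hξ_bdd
  have hξ_norm : ∀ ω, ‖ξ ω‖ ≤ C := fun ω => by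
    rw [Real.norm_eq_abs, abs_of_nonneg (hξ_nonneg ω)]
    exact hC ω
  have hdens := hB.aestronglyMeasurable_toReal_rnDeriv hA (fun i => hP_equiv 0 i)
  have hcondExp : ∀ i, (P i)[ξ|ℱ n] =ᵐ[P l] (P l)[ξ|ℱ n] := fun i =>
    condExp_ae_eq_condExp_of_norm_le (ℱ.le n) (hP_equiv i l) (hP_equiv l i) (hdens i l n) hξ_norm
  have hφ : ∀ i, (fun ω => ξ ω * (((P i).rnDeriv (P l) ω).toReal *
      (((P l)[fun ω' => ((P i).rnDeriv (P l) ω').toReal|ℱ n]) ω)⁻¹)) =ᵐ[P l] ξ := fun i => by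
    filter_upwards [toReal_rnDeriv_mul_inv_condExp_ae_eq_one (ℱ.le n) (hP_equiv l i) (hdens i l n)]
      with ω hω
    rw [hω, Pi.one_apply, mul_one]
  calc (P l)[fun ω => ⨆ i, ((P i)[ξ|ℱ n]) ω|ℱ m]
      =ᵐ[P l] (P l)[(P l)[ξ|ℱ n]|ℱ m] := condExp_congr_ae (ae_eq_iSup_of_forall_ae_eq hcondExp)
    _ =ᵐ[P l] (P l)[ξ|ℱ m] := condExp_condExp_of_le (ℱ.mono hmn.le) (ℱ.le n)
    _ =ᵐ[P l] _ := (ae_eq_iSup_of_forall_ae_eq fun i => condExp_congr_ae (hφ i)).symm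
end
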